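/- arXiv:math/0209335 — 2 statements merged into one kernel-verified Lean document; each statement's English description precedes it below -/
import Mathlib

section
/- Let n ≥ 1 and a, c ∈ ℝ. (i) If f : I → ℝ is twice differentiable on an open interval I and satisfies 4·f'' + (n−2a)·f'² = 0 on I, then e^{−a f(t)}·( −n·f''(t) + (n(2a−n−1)/4)·f'(t)² ) = −(n/4)·e^{−a f(t)}·f'(t)² ≤ 0 for all t ∈ I. (ii) If b := n − 2a ≠ 0 and f(t) = (4/b)·log(1 + bct/4) on I = {t : 1 + bct/4 > 0}, then this quantity equals −(n c²/4)·((4 + bct)/4)^{−2n/b} for all t ∈ I; if b = 0 and f(t) = ct, it equals −(n c²/4)·e^{−nct/2}. -/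
/-!
The ODE `4 f'' + (n - 2a) f'² = 0` lets one eliminate `f''` from the scalar curvature
`e^{-af}(-n f'' + (n(2a-n-1)/4) f'²)`, which leaves `-(n/4) e^{-af} f'²`. The explicit solutions
`f = (4/b) log(1 + bct/4)` (for `b = n - 2a ≠ 0`) and `f = ct` (for `b = 0`) satisfy the ODE
with `f' = c / (1 + bct/4)` resp. `f' = c`, and `e^{-af}` is a power of `1 + bct/4`
resp. an exponential, which gives the closed forms.
-/

open Real

lemma scalarCurvature_eq_of_ode {n a x y' y'' : ℝ} (h : 4 * y'' + (n - 2 * a) * y' ^ 2 = 0) :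
    exp (-a * x) * (-n * y'' + (n * (2 * a - n - 1) / 4) * y' ^ 2)
      = -(n / 4) * exp (-a * x) * y' ^ 2 := by
  have hy'' : y'' = -((n - 2 * a) / 4) * y' ^ 2 := by linarith
  rw [hy'']
  ring

lemma neg_mul_exp_mul_sq_nonpos {n : ℝ} (hn : 0 ≤ n) (x y : ℝ) :
    -(n / 4) * exp x * y ^ 2 ≤ 0 :=
  mul_nonpos_of_nonpos_of_nonneg
    (mul_nonpos_of_nonpos_of_nonneg (by linarith) (exp_pos x).le) (sq_nonneg y)

lemma hasDerivAt_one_add_mul_div_four (b c t : ℝ) :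
    HasDerivAt (fun s => 1 + b * c * s / 4) (b * c / 4) t := by
  simpa using (((hasDerivAt_id t).const_mul (b * c)).div_const 4).const_add 1

noncomputable def logProfile (b c t : ℝ) : ℝ := (4 / b) * log (1 + b * c * t / 4)

section LogProfile

variable {b : ℝ} (c : ℝ)

lemma hasDerivAt_logProfile (hb : b ≠ 0) {t : ℝ} (ht : 0 < 1 + b * c * t / 4) :
    HasDerivAt (logProfile b c) (c / (1 + b * c * t / 4)) t := by
  have hu := hasDerivAt_one_add_mul_div_four b c t
  exact ((hu.log ht.ne').const_mul (4 / b)).congr_deriv (by field_simp)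

lemma deriv_deriv_logProfile (hb : b ≠ 0) {t : ℝ} (ht : 0 < 1 + b * c * t / 4) :
    deriv (deriv (logProfile b c)) t = -(b * c ^ 2 / 4) / (1 + b * c * t / 4) ^ 2 := by
  have hopen : IsOpen {s : ℝ | 0 < 1 + b * c * s / 4} :=
    isOpen_lt continuous_const (by fun_prop)
  have hderiv : deriv (logProfile b c) =ᶠ[nhds t] fun s => c / (1 + b * c * s / 4) :=
    (hopen.eventually_mem ht).mono fun s hs => (hasDerivAt_logProfile c hb hs).deriv
  have hu := hasDerivAt_one_add_mul_div_four b c t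
  have hquot : HasDerivAt (fun s => c / (1 + b * c * s / 4))
      ((0 * (1 + b * c * t / 4) - c * (b * c / 4)) / (1 + b * c * t / 4) ^ 2) t :=
    (hasDerivAt_const t c).div hu ht.ne'
  rw [hderiv.deriv_eq, hquot.deriv]
  ring

lemma logProfile_ode (hb : b ≠ 0) {t : ℝ} (ht : 0 < 1 + b * c * t / 4) :
    4 * deriv (deriv (logProfile b c)) t + b * deriv (logProfile b c) t ^ 2 = 0 := by
  rw [deriv_deriv_logProfile c hb ht, (hasDerivAt_logProfile c hb ht).deriv]
  field_simp
  ring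

lemma exp_neg_mul_logProfile (a : ℝ) {t : ℝ} (ht : 0 < 1 + b * c * t / 4) :
    exp (-a * logProfile b c t) = (1 + b * c * t / 4) ^ (-4 * a / b) := by
  rw [rpow_def_of_pos ht, logProfile]
  ring_nf

end LogProfile

/-- Scalar curvature computation of Lemma 5.3.  (i) Along any solution of
`4 f'' + (n-2a) (f')² = 0` the quantity `e^{-af}(−n f'' + (n(2a−n−1)/4)(f')²)`
equals `−(n/4) e^{-af} (f')² ≤ 0`.  (ii) For the explicit solutions of Lemma 5.3
it equals `−(nc²/4)((4+bct)/4)^{−2n/b}` (case `b = n−2a ≠ 0`), respectively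
`−(nc²/4) e^{−nct/2}` (case `b = 0`, `f t = ct`). -/
theorem stmt_4 (n a c : ℝ) (hn : 1 ≤ n) :
    (∀ (I : Set ℝ), IsOpen I → ∀ f f' f'' : ℝ → ℝ,
      (∀ t ∈ I, HasDerivAt f (f' t) t) →
      (∀ t ∈ I, HasDerivAt f' (f'' t) t) →
      (∀ t ∈ I, 4 * f'' t + (n - 2 * a) * (f' t) ^ 2 = 0) →
      ∀ t ∈ I,
        Real.exp (-a * f t) * (-n * f'' t + (n * (2 * a - n - 1) / 4) * (f' t) ^ 2)
            = -(n / 4) * Real.exp (-a * f t) * (f' t) ^ 2 ∧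
        Real.exp (-a * f t) * (-n * f'' t + (n * (2 * a - n - 1) / 4) * (f' t) ^ 2) ≤ 0)
    ∧
    (∀ hb : n - 2 * a ≠ 0,
      let b : ℝ := n - 2 * a
      let f : ℝ → ℝ := fun t => (4 / b) * Real.log (1 + b * c * t / 4)
      ∀ t : ℝ, 1 + b * c * t / 4 > 0 →
        Real.exp (-a * f t) *
            (-n * deriv (deriv f) t + (n * (2 * a - n - 1) / 4) * (deriv f t) ^ 2)
          = -(n * c ^ 2 / 4) * ((4 + b * c * t) / 4) ^ (-(2 * n) / b))
    ∧
    (n - 2 * a = 0 →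
      let f : ℝ → ℝ := fun t => c * t
      ∀ t : ℝ,
        Real.exp (-a * f t) *
            (-n * deriv (deriv f) t + (n * (2 * a - n - 1) / 4) * (deriv f t) ^ 2)
          = -(n * c ^ 2 / 4) * Real.exp (-(n * c * t) / 2)) := by
  refine ⟨fun I _ f f' f'' _ _ hode t ht => ?_, fun hb t ht => ?_, fun h0 t => ?_⟩
  · rw [scalarCurvature_eq_of_ode (hode t ht)]
    exact ⟨rfl, neg_mul_exp_mul_sq_nonpos (by linarith) _ _⟩
  · change exp (-a * logProfile (n - 2 * a) c t) * (-n * deriv (deriv (logProfile (n - 2 * a) c)) t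
      + (n * (2 * a - n - 1) / 4) * deriv (logProfile (n - 2 * a) c) t ^ 2) = _
    rw [scalarCurvature_eq_of_ode (logProfile_ode c hb ht), exp_neg_mul_logProfile c a ht,
      (hasDerivAt_logProfile c hb ht).deriv]
    have hexponent : -(2 * n) / (n - 2 * a) = -4 * a / (n - 2 * a) - 2 := by
      field_simp
      ring
    rw [show (4 + (n - 2 * a) * c * t) / 4 = 1 + (n - 2 * a) * c * t / 4 by ring, hexponent,
      rpow_sub ht, rpow_two]
    field_simp
  · have hderiv : deriv (fun s => c * s) = fun _ => c := funext fun s => by simp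
    have ha : a = n / 2 := by linarith
    simp only [hderiv, deriv_const]
    rw [scalarCurvature_eq_of_ode (by simp [h0]), ha]
    ring_nf
end

section
/- Let m ∈ ℕ, a, λ_Q, λ_M ∈ ℝ, let I ⊆ ℝ be an open interval containing 0, let f : I → ℝ be continuously differentiable, and let h⁺, h⁻ : I → ℂ be differentiable functions satisfying h⁺' = −(m/2)·f'·h⁺ + i^{2m+3}·λ_Q·e^{(a/2) f}·h⁺ − i^{2m+3}·λ_M·e^{((a−1)/2) f}·h⁻ and h⁻' = i^{2m+3}·λ_M·e^{((a−1)/2) f}·h⁺ − (m/2)·f'·h⁻ − i^{2m+3}·λ_Q·e^{(a/2) f}·h⁻ on I, where i = √−1. Then the function |h⁺|² − |h⁻|² satisfies (|h⁺|² − |h⁻|²)'(t) = −m·f'(t)·(|h⁺(t)|² − |h⁻(t)|²) for all t ∈ I; consequently, if h⁺(0) = h⁻(0), then |h⁺(t)| = |h⁻(t)| for all t ∈ I. -/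
/-!
Write `c = i^{2m+3}`, which is purely imaginary. The system reads
`h⁺' = (p + A) h⁺ + B h⁻`, `h⁻' = B̄ h⁺ + (p + D) h⁻` with `p = −(m/2) f'` real,
`A = c λ_Q e^{af/2}`, `D = −A` purely imaginary and `B = −c λ_M e^{(a−1)f/2}`:
its matrix is `p` plus a matrix that is skew-adjoint for the indefinite form `|z|² − |w|²`,
so `F = |h⁺|² − |h⁻|²` satisfies `F' = 2p F = −m f' F`. Hence `F e^{m f}` is constant on the
interval, and it vanishes at `0` when `h⁺(0) = h⁻(0)`.
-/

open ComplexConjugate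

theorem Complex.conj_I_pow_of_odd {n : ℕ} (hn : Odd n) : conj (Complex.I ^ n) = -Complex.I ^ n := by
  rw [map_pow, Complex.conj_I, hn.neg_pow]

theorem Complex.re_eq_zero_of_conj_eq_neg {z : ℂ} (hz : conj z = -z) : z.re = 0 := by
  have := congrArg Complex.re hz
  rw [Complex.conj_re, Complex.neg_re] at this
  linarith

theorem hasDerivAt_norm_sq_sub_norm_sq {u v : ℝ → ℂ} {t p : ℝ} {A B D : ℂ}
    (hA : conj A = -A) (hD : conj D = -D)
    (hu : HasDerivAt u ((p + A) * u t + B * v t) t)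
    (hv : HasDerivAt v (conj B * u t + (p + D) * v t) t) :
    HasDerivAt (fun s => ‖u s‖ ^ 2 - ‖v s‖ ^ 2) (2 * p * (‖u t‖ ^ 2 - ‖v t‖ ^ 2)) t := by
  refine (hu.norm_sq.sub hv.norm_sq).congr_deriv ?_
  have hAre := Complex.re_eq_zero_of_conj_eq_neg hA
  have hDre := Complex.re_eq_zero_of_conj_eq_neg hD
  simp only [Complex.inner, Complex.sq_norm, Complex.normSq_apply, Complex.mul_re,
    Complex.mul_im, Complex.add_re, Complex.add_im, Complex.conj_re, Complex.conj_im,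
    Complex.ofReal_re, Complex.ofReal_im, hAre, hDre]
  ring

/-- `F e^{−G}` has derivative zero. -/
theorem Convex.eq_zero_of_hasDerivAt_eq_mul {I : Set ℝ} (hI : Convex ℝ I)
    {F G g : ℝ → ℝ} (hG : ∀ t ∈ I, HasDerivAt G (g t) t)
    (hF : ∀ t ∈ I, HasDerivAt F (g t * F t) t) {t₀ : ℝ} (ht₀ : t₀ ∈ I) (hF₀ : F t₀ = 0) :
    ∀ t ∈ I, F t = 0 := by
  intro t ht
  have hderiv : ∀ s ∈ I, HasDerivWithinAt (fun s => F s * Real.exp (-G s)) 0 I s := by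
    intro s hs
    refine (((hF s hs).mul (hG s hs).neg.exp).congr_deriv ?_).hasDerivWithinAt
    ring
  have hconst := hI.norm_image_sub_le_of_norm_hasDerivWithin_le hderiv
    (fun _ _ => norm_zero.le) ht₀ ht
  rw [zero_mul, norm_le_zero_iff, sub_eq_zero, hF₀, zero_mul] at hconst
  exact (mul_eq_zero.mp hconst).resolve_right (Real.exp_ne_zero _)

theorem stmt_7_general (m : ℕ) (a lamQ lamM : ℝ) (I : Set ℝ)
    (hconn : I.OrdConnected) (h0I : (0 : ℝ) ∈ I)
    (f f' : ℝ → ℝ) (hf : ∀ t ∈ I, HasDerivAt f (f' t) t)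
    (hp hm : ℝ → ℂ)
    (hhp : ∀ t ∈ I, HasDerivAt hp
      (-(((m : ℝ) / 2 : ℝ) : ℂ) * ((f' t : ℝ) : ℂ) * hp t
        + Complex.I ^ (2 * m + 3) * (lamQ : ℂ) * ((Real.exp ((a / 2) * f t) : ℝ) : ℂ) * hp t
        - Complex.I ^ (2 * m + 3) * (lamM : ℂ) *
            ((Real.exp (((a - 1) / 2) * f t) : ℝ) : ℂ) * hm t) t)
    (hhm : ∀ t ∈ I, HasDerivAt hm
      (Complex.I ^ (2 * m + 3) * (lamM : ℂ) *
          ((Real.exp (((a - 1) / 2) * f t) : ℝ) : ℂ) * hp t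
        - (((m : ℝ) / 2 : ℝ) : ℂ) * ((f' t : ℝ) : ℂ) * hm t
        - Complex.I ^ (2 * m + 3) * (lamQ : ℂ) *
            ((Real.exp ((a / 2) * f t) : ℝ) : ℂ) * hm t) t) :
    (∀ t ∈ I, HasDerivAt (fun s => ‖hp s‖ ^ 2 - ‖hm s‖ ^ 2)
      (-(m : ℝ) * f' t * (‖hp t‖ ^ 2 - ‖hm t‖ ^ 2)) t) ∧
    (hp 0 = hm 0 → ∀ t ∈ I, ‖hp t‖ = ‖hm t‖) := by
  set c := Complex.I ^ (2 * m + 3)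
  have hc : conj c = -c := Complex.conj_I_pow_of_odd ⟨m + 1, by ring⟩
  have hcx (x : ℝ) : conj (c * x) = -(c * x) := by simp [hc]
  have hderiv : ∀ t ∈ I, HasDerivAt (fun s => ‖hp s‖ ^ 2 - ‖hm s‖ ^ 2)
      (-(m : ℝ) * f' t * (‖hp t‖ ^ 2 - ‖hm t‖ ^ 2)) t := by
    intro t ht
    have hu : HasDerivAt hp ((((-((m : ℝ) / 2 * f' t) : ℝ) : ℂ) +
        c * ((lamQ * Real.exp (a / 2 * f t) : ℝ) : ℂ)) * hp t +
        -(c * ((lamM * Real.exp ((a - 1) / 2 * f t) : ℝ) : ℂ)) * hm t) t :=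
      (hhp t ht).congr_deriv (by simp only [Complex.ofReal_mul, Complex.ofReal_neg]; ring)
    have hv : HasDerivAt hm (conj (-(c * ((lamM * Real.exp ((a - 1) / 2 * f t) : ℝ) : ℂ))) * hp t +
        (((-((m : ℝ) / 2 * f' t) : ℝ) : ℂ) +
        -(c * ((lamQ * Real.exp (a / 2 * f t) : ℝ) : ℂ))) * hm t) t :=
      (hhm t ht).congr_deriv
        (by rw [map_neg, hcx]; simp only [Complex.ofReal_mul, Complex.ofReal_neg]; ring)
    refine (hasDerivAt_norm_sq_sub_norm_sq (hcx _) ?_ hu hv).congr_deriv (by ring)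
    rw [map_neg, hcx]
  refine ⟨hderiv, fun h00 t ht => ?_⟩
  have hzero := (convex_iff_ordConnected.mpr hconn).eq_zero_of_hasDerivAt_eq_mul
    (G := fun s => -(m : ℝ) * f s) (fun s hs => (hf s hs).const_mul _) hderiv h0I
    (by rw [h00, sub_self]) t ht
  rwa [sub_eq_zero, sq_eq_sq₀ (norm_nonneg _) (norm_nonneg _)] at hzero

/-- The conservation argument in the proof of Proposition 7.1: if `(h⁺, h⁻)` solves the
displayed linear system on an open interval `I` containing `0`, then
`(|h⁺|² − |h⁻|²)' = −m f' (|h⁺|² − |h⁻|²)` on `I`; consequently `h⁺ 0 = h⁻ 0` implies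
`|h⁺ t| = |h⁻ t|` for all `t ∈ I`. -/
theorem stmt_7 (m : ℕ) (a lamQ lamM : ℝ) (I : Set ℝ) (hI : IsOpen I)
    (hconn : I.OrdConnected) (h0I : (0 : ℝ) ∈ I)
    (f f' : ℝ → ℝ) (hf : ∀ t ∈ I, HasDerivAt f (f' t) t)
    (hp hm : ℝ → ℂ)
    (hhp : ∀ t ∈ I, HasDerivAt hp
      (-(((m : ℝ) / 2 : ℝ) : ℂ) * ((f' t : ℝ) : ℂ) * hp t
        + Complex.I ^ (2 * m + 3) * (lamQ : ℂ) * ((Real.exp ((a / 2) * f t) : ℝ) : ℂ) * hp t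
        - Complex.I ^ (2 * m + 3) * (lamM : ℂ) *
            ((Real.exp (((a - 1) / 2) * f t) : ℝ) : ℂ) * hm t) t)
    (hhm : ∀ t ∈ I, HasDerivAt hm
      (Complex.I ^ (2 * m + 3) * (lamM : ℂ) *
          ((Real.exp (((a - 1) / 2) * f t) : ℝ) : ℂ) * hp t
        - (((m : ℝ) / 2 : ℝ) : ℂ) * ((f' t : ℝ) : ℂ) * hm t
        - Complex.I ^ (2 * m + 3) * (lamQ : ℂ) *
            ((Real.exp ((a / 2) * f t) : ℝ) : ℂ) * hm t) t) :
    (∀ t ∈ I, HasDerivAt (fun s => ‖hp s‖ ^ 2 - ‖hm s‖ ^ 2)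
      (-(m : ℝ) * f' t * (‖hp t‖ ^ 2 - ‖hm t‖ ^ 2)) t) ∧
    (hp 0 = hm 0 → ∀ t ∈ I, ‖hp t‖ = ‖hm t‖) :=
  stmt_7_general m a lamQ lamM I hconn h0I f f' hf hp hm hhp hhm
end
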